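/- Let P be a lattice polytope. Then mP is a normal polytope for every integer m ≥ d_P. -/
import Mathlib


open Finset Pointwise

noncomputable section

/-- Lattice points: `ZL N = ℤ^N`. -/
abbrev ZL (N : ℕ) := Fin N → ℤ

/-- Embedding of the lattice into `ℝ^N`. -/
def toR {N : ℕ} (x : ZL N) : Fin N → ℝ := fun i => (x i : ℝ)

/-- The lattice polytope spanned by a finite set `V` of lattice points. -/
def poly {N : ℕ} (V : Finset (ZL N)) : Set (Fin N → ℝ) :=
  convexHull ℝ (toR '' (V : Set (ZL N)))

/-- The lattice points of the dilate `k • P`. -/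
def latPts {N : ℕ} (V : Finset (ZL N)) (k : ℕ) : Set (ZL N) :=
  {x | toR x ∈ (k : ℝ) • poly V}

/-- `P` is `k`-normal: every lattice point of `kP` is a sum of `k` lattice points of `P`. -/
def kNormal {N : ℕ} (V : Finset (ZL N)) (k : ℕ) : Prop :=
  ∀ x ∈ latPts V k, ∃ f : Fin k → ZL N, (∀ i, f i ∈ latPts V 1) ∧ ∑ i, f i = x

/-- `P` is normal. -/
def NormalPoly {N : ℕ} (V : Finset (ZL N)) : Prop := ∀ k, 1 ≤ k → kNormal V k

/-- The set of which `d_P` is the least element. -/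
def dSet {N : ℕ} (V : Finset (ZL N)) : Set ℕ :=
  {n | 0 < n ∧ ∀ k ≥ n, latPts V (k + 1) = latPts V 1 + latPts V k}

/-- The set of which the `k`-normality threshold `k_P` is the least element. -/
def kSet {N : ℕ} (V : Finset (ZL N)) : Set ℕ :=
  {K | 0 < K ∧ ∀ k ≥ K, kNormal V k}

/-- The set of which `ν_P` is the least element. -/
def nuSet {N : ℕ} (V : Finset (ZL N)) : Set ℕ :=
  {n | 0 < n ∧ ∀ k ≥ n, latPts V (k + 1) = (V : Set (ZL N)) + latPts V k}

/-- `v` is a vertex of `P`. -/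
def IsVertex {N : ℕ} (V : Finset (ZL N)) (v : ZL N) : Prop :=
  v ∈ V ∧ toR v ∈ Set.extremePoints ℝ (poly V)

/-- `P` is very ample: for every vertex `v`, every lattice point of the cone
`ℝ_{≥0}(P - v)` is a finite sum of elements `w - v` with `w ∈ P ∩ M`. -/
def VeryAmple {N : ℕ} (V : Finset (ZL N)) : Prop :=
  ∀ v, IsVertex V v → ∀ u : ZL N,
    (∃ c : ℝ, 0 ≤ c ∧ ∃ p ∈ poly V, toR u = c • (p - toR v)) →
    ∃ (m : ℕ) (w : Fin m → ZL N), (∀ i, w i ∈ latPts V 1) ∧ u = ∑ i, (w i - v)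

/-- The set of numbers `m` such that `x - d_P v` is a sum of `m` elements of `(P ∩ M) - v`;
`σ(x, d_P v)` is its least element. -/
def sigmaSet {N : ℕ} (V : Finset (ZL N)) (dP : ℕ) (x v : ZL N) : Set ℕ :=
  {m | ∃ w : Fin m → ZL N, (∀ i, w i ∈ latPts V 1) ∧ x - dP • v = ∑ i, (w i - v)}

/-- The set of all values `σ(x, d_P v)`; `m_P` is its greatest element. -/
def mSet {N : ℕ} (V : Finset (ZL N)) (dP : ℕ) : Set ℕ :=
  {s | ∃ x ∈ latPts V dP, ∃ v, IsVertex V v ∧ IsLeast (sigmaSet V dP x v) s}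

end

lemma toR_add {N : ℕ} (x y : ZL N) : toR (x + y) = toR x + toR y := by
  funext i; simp [toR]

lemma latPts_add_mem {N : ℕ} (V : Finset (ZL N)) {a b : ℕ} {x y : ZL N}
    (hx : x ∈ latPts V a) (hy : y ∈ latPts V b) : x + y ∈ latPts V (a + b) := by
  have hconv : Convex ℝ (poly V) := convex_convexHull ℝ _
  have h : ((a + b : ℕ) : ℝ) • poly V = (a : ℝ) • poly V + (b : ℝ) • poly V := by
    push_cast
    exact hconv.add_smul (by positivity) (by positivity)
  have : toR (x + y) ∈ ((a + b : ℕ) : ℝ) • poly V := by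
    rw [toR_add, h]; exact Set.add_mem_add hx hy
  exact this

lemma sum_mem_latPts {N : ℕ} (V : Finset (ZL N)) :
    ∀ a : ℕ, 1 ≤ a → ∀ g : Fin a → ZL N, (∀ i, g i ∈ latPts V 1) →
      ∑ i, g i ∈ latPts V a := by
  intro a ha
  induction a, ha using Nat.le_induction with
  | base => intro g hg; simpa using hg 0
  | succ a ha ih =>
    intro g hg
    rw [Fin.sum_univ_succ]
    have := latPts_add_mem V (hg 0) (ih (fun i => g i.succ) (fun i => hg i.succ))
    simpa [add_comm] using this

lemma peel {N : ℕ} (V : Finset (ZL N)) (dP : ℕ) (hdP : dP ∈ dSet V) :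
    ∀ (a n : ℕ), dP ≤ n → ∀ x ∈ latPts V (n + a),
      ∃ g : Fin a → ZL N, (∀ i, g i ∈ latPts V 1) ∧ ∃ z ∈ latPts V n, x = ∑ i, g i + z := by
  intro a
  induction a with
  | zero => intro n hn x hx; exact ⟨Fin.elim0, fun i => i.elim0, x, hx, by simp⟩
  | succ a ih =>
    intro n hn x hx
    have heq := hdP.2 (n + a) (le_trans hn (Nat.le_add_right _ _))
    rw [show n + (a + 1) = (n + a) + 1 from by ring, heq] at hx
    obtain ⟨y, hy, z', hz', hxyz⟩ := hx
    obtain ⟨g, hg, z, hz, hzeq⟩ := ih n hn z' hz'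
    refine ⟨Fin.cons y g, ?_, z, hz, ?_⟩
    · intro i; refine Fin.cases hy (fun j => hg j) i
    · rw [Fin.sum_cons, add_assoc, ← hzeq]
      exact hxyz.symm


/-- For every `m ≥ d_P`, the dilate `mP` is a normal polytope: for all
`k ≥ 1`, every lattice point of `k·(mP)` is a sum of `k` lattice points of `mP`. -/
theorem stmt17 {N : ℕ} (V : Finset (ZL N)) (dP m : ℕ)
    (hdP : IsLeast (dSet V) dP) (hm : dP ≤ m) :
    ∀ k : ℕ, 1 ≤ k → ∀ x ∈ latPts V (m * k),
      ∃ f : Fin k → ZL N, (∀ i, f i ∈ latPts V m) ∧ ∑ i, f i = x := by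
  have hdm : 1 ≤ m := le_trans hdP.1.1 hm
  intro k hk
  induction k, hk using Nat.le_induction with
  | base =>
    intro x hx
    rw [Nat.mul_one] at hx
    exact ⟨fun _ => x, fun _ => hx, by simp⟩
  | succ k hk ih =>
    intro x hx
    have hmk : dP ≤ m * k := le_trans hm (by
      calc m = m * 1 := (Nat.mul_one m).symm
        _ ≤ m * k := Nat.mul_le_mul_left m hk)
    rw [show m * (k + 1) = m * k + m from by ring] at hx
    obtain ⟨g, hg, z, hz, hxeq⟩ := peel V dP hdP.1 m (m * k) hmk x hx
    obtain ⟨f', hf', hf'sum⟩ := ih z hz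
    refine ⟨Fin.cons (∑ i, g i) f', ?_, ?_⟩
    · intro i
      refine Fin.cases ?_ (fun j => hf' j) i
      exact sum_mem_latPts V m hdm g hg
    · rw [Fin.sum_cons, hf'sum]
      exact hxeq.symm
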